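/- arXiv:math/0602486 — 2 statements merged into one kernel-verified Lean document; each statement's English description precedes it below -/
import Mathlib

section
/- Let M be a topological space and F : M → Set M an assignment of 'leaves' such that (1) y ∈ F(x) implies F(y) = F(x), (2) F(p) is dense in M for some fixed point p, and (3) F is lower semicontinuous at p in the sense that for every open set U intersecting F(p), there is a neighborhood W of p such that F(y) ∩ U ≠ ∅ for all y ∈ W. If x ∈ M is such that F(x) intersects every neighborhood of p, then F(x) is dense in M. -/
/-- If the leaf of `p` is dense, leaves form a partition, `F` is lower
semicontinuous at `p`, and the leaf of `x` accumulates at `p`, then the leaf of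
`x` is dense. -/
theorem stmt_5 {M : Type*} [TopologicalSpace M] (F : M → Set M) (p : M)
    (hmem : ∀ x : M, x ∈ F x)
    (heq : ∀ x y : M, y ∈ F x → F y = F x)
    (hdense : Dense (F p))
    (hlsc : ∀ U : Set M, IsOpen U → (U ∩ F p).Nonempty →
      ∃ W ∈ nhds p, ∀ y ∈ W, (F y ∩ U).Nonempty)
    (x : M) (hx : ∀ W ∈ nhds p, (F x ∩ W).Nonempty) :
    Dense (F x) := by
  rw [dense_iff_inter_open]
  intro U hU hUne
  obtain ⟨W, hW, hW'⟩ := hlsc U hU (by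
    obtain ⟨z, hz⟩ := hUne
    exact (dense_iff_inter_open.mp hdense) U hU ⟨z, hz⟩)
  obtain ⟨y, hyx, hyW⟩ := hx W hW
  obtain ⟨z, hzF, hzU⟩ := hW' y hyW
  rw [heq x y hyx] at hzF
  exact ⟨z, hzU, hzF⟩
end

section
/- Let M be a metric space, f : M → M a homeomorphism, F : M → Set M with f(F(x)) = F(f(x)) and y ∈ F(x) ⇒ F(y) = F(x), and let p be a fixed point of f. Suppose S ⊆ M is a set with p ∈ S, f(S) ⊆ S, and S dense in M, and suppose F(p) ⊇ S. If x ∈ M satisfies p ∈ closure(F(x)), and F is 'continuous at p' in the sense that for every open U meeting F(p) there exists δ > 0 such that every y with d(y,p) < δ has F(y) ∩ U ≠ ∅, then F(x) is dense in M. -/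
/-- If a leaf accumulates at a fixed point `p` whose leaf contains a dense
forward-invariant set, then by continuity of the leaves at `p`, the leaf is
dense. -/
theorem stmt_14 {M : Type*} [MetricSpace M] (f : M ≃ₜ M)
    (F : M → Set M)
    (hinv : ∀ x : M, f '' F x = F (f x))
    (heq : ∀ x y : M, y ∈ F x → F y = F x)
    (p : M) (hp : f p = p)
    (S : Set M) (hpS : p ∈ S) (hfS : f '' S ⊆ S) (hSdense : Dense S)
    (hSF : S ⊆ F p)
    (x : M) (hx : p ∈ closure (F x))
    (hcont : ∀ U : Set M, IsOpen U → (U ∩ F p).Nonempty →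
      ∃ δ > 0, ∀ y : M, dist y p < δ → (F y ∩ U).Nonempty) :
    Dense (F x) := by
  rw [dense_iff_inter_open]
  intro U hU hUne
  have hUFp : (U ∩ F p).Nonempty := by
    obtain ⟨s, hsU, hsS⟩ := hSdense.inter_open_nonempty U hU hUne
    exact ⟨s, hsU, hSF hsS⟩
  obtain ⟨δ, hδ, hδc⟩ := hcont U hU hUFp
  obtain ⟨y, hyFx, hyd⟩ := Metric.mem_closure_iff.mp hx δ hδ
  have := hδc y (by rwa [dist_comm]) 
  rw [heq x y hyFx] at this
  obtain ⟨z, hz1, hz2⟩ := this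
  exact ⟨z, hz2, hz1⟩
end
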